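/- arXiv:0803.0855 — 3 statements merged into one kernel-verified Lean document; each statement's English description precedes it below -/
import Mathlib

section
/- Let F be a field, n ≥ 1 an integer, and Q an n×n matrix over F all of whose row sums and all of whose column sums are zero. Then all first cofactors of Q are equal; equivalently, all entries of the adjugate matrix of Q are equal to a common scalar κ*, so that adj(Q) = κ*·J, where J is the all-ones matrix. -/
/-!
Replace row `j` of `Q` by the unit vector `eᵢ` to get a matrix `M`. The `j`-th column of
`adj M` is that of `adj Q`, since it only involves the minors with row `j` deleted, while zero
row sums of `Q` give `M 𝟙 = eⱼ`. Hence the `j`-th column of `adj Q` is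
`adj M eⱼ = adj M M 𝟙 = det M • 𝟙`, a constant vector. Zero column sums give the same for
the rows, through `adj Qᵀ = (adj Q)ᵀ`.
-/

namespace Matrix

variable {R n : Type*} [CommRing R] [Fintype n] [DecidableEq n]

theorem adjugate_updateRow_apply_self (A : Matrix n n R) (j k : n) (r : n → R) :
    (A.updateRow j r).adjugate k j = A.adjugate k j := by
  rw [adjugate_apply, adjugate_apply, updateRow_idem]

theorem adjugate_apply_eq_of_sum_row_eq_zero (A : Matrix n n R) (hrow : ∀ i, ∑ j, A i j = 0)
    (i k j : n) : A.adjugate k j = A.adjugate i j := by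
  have hA : A *ᵥ 1 = 0 := funext fun l => by simp [mulVec, dotProduct, hrow]
  set M := A.updateRow j (Pi.single i 1)
  have hM : M *ᵥ 1 = Pi.single j 1 := by
    rw [updateRow_mulVec, single_dotProduct, one_mul, hA, Pi.one_apply]
    rfl
  calc A.adjugate k j = M.adjugate k j := (adjugate_updateRow_apply_self A j k _).symm
    _ = (M.adjugate *ᵥ (M *ᵥ 1)) k := by rw [hM, mulVec_single_one]; rfl
    _ = A.adjugate i j := by
      rw [mulVec_mulVec, adjugate_mul, smul_mulVec, one_mulVec, adjugate_apply]
      exact mul_one _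

theorem adjugate_apply_eq_of_sum_col_eq_zero (A : Matrix n n R) (hcol : ∀ j, ∑ i, A i j = 0)
    (i j k : n) : A.adjugate i k = A.adjugate i j := by
  simpa only [← adjugate_transpose, transpose_apply] using
    adjugate_apply_eq_of_sum_row_eq_zero Aᵀ hcol j k i

theorem exists_adjugate_eq_const_of_sum_eq_zero (A : Matrix n n R)
    (hrow : ∀ i, ∑ j, A i j = 0) (hcol : ∀ j, ∑ i, A i j = 0) :
    ∃ κ : R, A.adjugate = of fun _ _ => κ := by
  cases isEmpty_or_nonempty n with
  | inl => exact ⟨0, Subsingleton.elim _ _⟩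
  | inr h =>
    obtain ⟨i₀⟩ := h
    refine ⟨A.adjugate i₀ i₀, ext fun i j => ?_⟩
    rw [of_apply, adjugate_apply_eq_of_sum_row_eq_zero A hrow i₀ i j,
      adjugate_apply_eq_of_sum_col_eq_zero A hcol i₀ i₀ j]

end Matrix

theorem stmt_2_general (F : Type*) [Field F] (n : ℕ)
    (Q : Matrix (Fin n) (Fin n) F)
    (hrow : ∀ i, ∑ j, Q i j = 0) (hcol : ∀ j, ∑ i, Q i j = 0) :
    ∃ κ : F, Q.adjugate = Matrix.of fun _ _ => κ :=
  Q.exists_adjugate_eq_const_of_sum_eq_zero hrow hcol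

/-- Let `F` be a field, `n ≥ 1`, and `Q` an `n × n` matrix over `F` all of whose row sums
and column sums are zero.  Then all first cofactors of `Q` are equal: all entries of the
adjugate matrix of `Q` equal a common scalar `κ*`, i.e. `adj(Q) = κ* · J` for the all-ones
matrix `J`. -/
theorem stmt_2 (F : Type*) [Field F] (n : ℕ) (hn : 1 ≤ n)
    (Q : Matrix (Fin n) (Fin n) F)
    (hrow : ∀ i, ∑ j, Q i j = 0) (hcol : ∀ j, ∑ i, Q i j = 0) :
    ∃ κ : F, Q.adjugate = Matrix.of fun _ _ => κ :=
  stmt_2_general F n Q hrow hcol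
end

section
/- Let G be a connected weighted multigraph and let e_k be an edge with distinct endpoints p_i and p_j. Then for all positive edge lengths ℓ_1,…,ℓ_m one has r(p_i,p_j)·η_G(ℓ_1,…,ℓ_m) = ℓ_k · η_G(ℓ_1,…,ℓ_m)|_{ℓ_k = 0}; in particular, as a polynomial in the lengths, ℓ_k divides r(p_i,p_j)·η_G and the quotient is the polynomial η_G evaluated at ℓ_k = 0. -/
open scoped Classical
open Matrix Filter Topology

/-- A weighted multigraph with vertex type `V` and edge index type `E`:
each edge is assigned an (ordered representative of an unordered) pair of endpoints. -/
structure WMG (V E : Type) where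
  ends : E → V × V

namespace WMG

variable {V E : Type} [Fintype V] [DecidableEq V] [Fintype E] [DecidableEq E]

/-- `a` and `b` are joined by some edge belonging to `S`. -/
def Step (G : WMG V E) (S : Set E) (a b : V) : Prop :=
  ∃ k ∈ S, G.ends k = (a, b) ∨ G.ends k = (b, a)

/-- Any two vertices can be joined by a walk using only edges from `S`. -/
def ConnectedVia (G : WMG V E) (S : Set E) : Prop :=
  ∀ a b : V, Relation.ReflTransGen (G.Step S) a b

/-- `G` is connected. -/
def Connected (G : WMG V E) : Prop := G.ConnectedVia Set.univ

/-- A set `T` of edges is a spanning tree: it has `#V - 1` edges and connects all vertices. -/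
def IsSpanningTree (G : WMG V E) (T : Finset E) : Prop :=
  T.card + 1 = Fintype.card V ∧ G.ConnectedVia ↑T

/-- `η_G(ℓ) = Σ_{T spanning tree} Π_{k ∉ T} ℓ_k`. -/
noncomputable def eta (G : WMG V E) (ℓ : E → ℝ) : ℝ :=
  ∑ T : Finset E, if G.IsSpanningTree T then ∏ k ∈ Tᶜ, ℓ k else 0

/-- The weighted Laplacian matrix of `G`. -/
noncomputable def lap (G : WMG V E) (ℓ : E → ℝ) : Matrix V V ℝ :=
  Matrix.of fun a b =>
    if a = b then
      ∑ k : E, if ((G.ends k).1 = a ∨ (G.ends k).2 = a) ∧ (G.ends k).1 ≠ (G.ends k).2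
        then (ℓ k)⁻¹ else 0
    else
      - ∑ k : E, if G.ends k = (a, b) ∨ G.ends k = (b, a) then (ℓ k)⁻¹ else 0

/-- The standard basis vector (point mass) at a vertex. -/
def delta (a : V) : V → ℝ := fun x => if x = a then 1 else 0

/-- Effective resistance `r(a,b)`: the entry at `a` of the unique solution `h` of
`Q^{(b)} h = u_a` (the Laplacian with row and column `b` deleted).  Equivalently, writing
`h̃` for the extension of `h` by `h̃ b = 0`, it is the entry at `a` of the unique `v` with
`Q v = δ_a - δ_b` and `v b = 0` (the two systems have the same solutions since all row and
column sums of `Q` vanish).  We set `r(a,a) = 0`; this is automatic in the connected case. -/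
noncomputable def res (G : WMG V E) (ℓ : E → ℝ) (a b : V) : ℝ :=
  if h : ∃! v : V → ℝ, G.lap ℓ *ᵥ v = delta a - delta b ∧ v b = 0
  then h.exists.choose a else 0

/-- The valence of a vertex (loop edges counted twice). -/
def valence (G : WMG V E) (a : V) : ℕ :=
  ∑ k : E, ((if (G.ends k).1 = a then 1 else 0) + (if (G.ends k).2 = a then 1 else 0))

/-- The genus of the polarized graph `(G, q)`: `g = #E - #V + 1 + Σ_a q(a)`. -/
def genus (G : WMG V E) (q : V → ℕ) : ℤ :=
  (Fintype.card E : ℤ) - (Fintype.card V : ℤ) + 1 + ∑ a, (q a : ℤ)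

/-- The canonical divisor `K(a) = 2 q(a) + v(a) - 2`, as a real number. -/
noncomputable def Kdiv (G : WMG V E) (q : V → ℕ) (a : V) : ℝ :=
  2 * (q a : ℝ) + (G.valence a : ℝ) - 2

/-- `F(e_k) = 1 - r(e_k)/ℓ_k` where `r(e_k)` is the resistance between the endpoints. -/
noncomputable def Fres (G : WMG V E) (ℓ : E → ℝ) (k : E) : ℝ :=
  1 - G.res ℓ (G.ends k).1 (G.ends k).2 / ℓ k

/-- Zhang's invariant `ε` of the polarized metric graph, via the paper's explicit formula. -/
noncomputable def epsilon (G : WMG V E) (q : V → ℕ) (ℓ : E → ℝ) : ℝ :=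
  (1 / (G.genus q : ℝ)) * ∑ a, ∑ b, (q a : ℝ) * G.Kdiv q b * G.res ℓ a b
  + (((G.genus q : ℝ) - 1) / (3 * (G.genus q : ℝ))) * ∑ k, (G.Fres ℓ k) ^ 2 * ℓ k
  + (1 / (2 * (G.genus q : ℝ))) * ∑ a, G.Kdiv q a *
      ∑ k, G.Fres ℓ k * (G.res ℓ a (G.ends k).1 + G.res ℓ a (G.ends k).2)

/-- `r(K, K) = Σ_{a,b} K(a) K(b) r(a,b)`. -/
noncomputable def rKK (G : WMG V E) (q : V → ℕ) (ℓ : E → ℝ) : ℝ :=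
  ∑ a, ∑ b, G.Kdiv q a * G.Kdiv q b * G.res ℓ a b

/-- Zhang's invariant `φ` of the polarized metric graph, via the paper's explicit formula
`φ = ((5g-2)/(4(g-1))) ε - (3/(8(g-1))) r(K,K) - ℓ(G)/4`. -/
noncomputable def phi (G : WMG V E) (q : V → ℕ) (ℓ : E → ℝ) : ℝ :=
  ((5 * (G.genus q : ℝ) - 2) / (4 * ((G.genus q : ℝ) - 1))) * G.epsilon q ℓ
  - (3 / (8 * ((G.genus q : ℝ) - 1))) * G.rKK q ℓ
  - (∑ k, ℓ k) / 4

/-- The map on vertices identifying `b` with `a` (realized on the subtype omitting `b`). -/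
def fuseV (a b : V) (hab : a ≠ b) (x : V) : {y : V // y ≠ b} :=
  if h : x = b then ⟨a, hab⟩ else ⟨x, h⟩

/-- The fusion `G'` of two distinct vertices `a, b` of `G`: identify `a` and `b`,
keeping all edges and lengths. -/
def fuse (G : WMG V E) (a b : V) (hab : a ≠ b) : WMG {y : V // y ≠ b} E :=
  ⟨fun k => (fuseV a b hab (G.ends k).1, fuseV a b hab (G.ends k).2)⟩

/-- The contraction `G/e` of a non-loop edge: identify the two endpoints of `e`,
delete `e`, and keep all other edges. -/
def contract (G : WMG V E) (k0 : E) (hk : (G.ends k0).1 ≠ (G.ends k0).2) :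
    WMG {y : V // y ≠ (G.ends k0).2} {k : E // k ≠ k0} :=
  ⟨fun k => (fuseV (G.ends k0).1 (G.ends k0).2 hk (G.ends k.1).1,
             fuseV (G.ends k0).1 (G.ends k0).2 hk (G.ends k.1).2)⟩

end WMG

/-- The `i`-th elementary symmetric polynomial of the family `ℓ`. -/
noncomputable def esymE {E : Type} [Fintype E] [DecidableEq E] (i : ℕ) (ℓ : E → ℝ) : ℝ :=
  ∑ s ∈ Finset.powersetCard i (Finset.univ : Finset E), ∏ k ∈ s, ℓ k

/-!
Write the Laplacian as `Q = B diag(ℓ⁻¹) Bᵀ`, with `B` the signed incidence matrix. A square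
submatrix of `B` with rows `R` and columns `S` has determinant `±1` if `S` is a spanning forest in
which every tree contains exactly one vertex outside `R`, and is singular otherwise; so by
Cauchy–Binet the principal minor of `Q` on `R` is the sum of `∏_{e ∈ S} ℓ_e⁻¹` over such forests
(the all-minors matrix-tree theorem). Removing `p_j` gives `η_G / ∏ ℓ`. Removing both endpoints
of `e_k` gives the two-tree forests separating `p_i` from `p_j`; these are exactly the `T \ {e_k}`
for spanning trees `T ∋ e_k`, which yields `ℓ_k η_G|_{ℓ_k = 0} / ∏ ℓ`. By Cramer's rule for
`Q^{(j)} h = u_i`, `r(p_i, p_j)` is the quotient of these two minors.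
-/

open Function

theorem Relation.ReflTransGen.exists_rel_of_notMem_of_mem {α : Type*} {r : α → α → Prop}
    {T : Set α} {x t : α} (h : Relation.ReflTransGen r x t) (hx : x ∉ T) (ht : t ∈ T) :
    ∃ y ∉ T, ∃ z ∈ T, r y z := by
  induction h using Relation.ReflTransGen.head_induction_on with
  | refl => exact absurd ht hx
  | @head y z hyz _ ih => exact if hz : z ∈ T then ⟨y, hx, z, hz, hyz⟩ else ih hz

theorem Relation.ReflTransGen.apply_eq_of_forall_rel {α β : Type*} {r : α → α → Prop} {f : α → β}
    (hf : ∀ y z, r y z → f y = f z) {x t : α} (h : Relation.ReflTransGen r x t) : f x = f t := by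
  induction h with
  | refl => rfl
  | tail _ hyz ih => exact ih.trans (hf _ _ hyz)

theorem Fin.range_comp_succAbove {α : Type*} {n : ℕ} {f : Fin (n + 1) → α}
    (hf : Injective f) (j : Fin (n + 1)) :
    Set.range (f ∘ j.succAbove) = Set.range f \ {f j} := by
  rw [Set.range_comp, Fin.range_succAbove, Set.image_compl_eq_range_sdiff_image hf,
    Set.image_singleton]

theorem Finset.exists_injective_image_univ_eq {α β : Type*} [Fintype α] [DecidableEq β]
    {S : Finset β} (hS : S.card = Fintype.card α) :
    ∃ u : α → β, Injective u ∧ Finset.univ.image u = S := by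
  let e : α ≃ S := (Fintype.equivFin α).trans ((finCongr hS.symm).trans S.equivFin.symm)
  refine ⟨fun a => e a, Subtype.val_injective.comp e.injective, ?_⟩
  ext x
  simp only [Finset.mem_image, Finset.mem_univ, true_and]
  exact ⟨fun ⟨a, ha⟩ => ha ▸ (e a).2, fun hx => ⟨e.symm ⟨x, hx⟩, by simp⟩⟩

theorem Finset.prod_inv_mul_prod_eq_prod_compl {ι K : Type*} [Fintype ι] [DecidableEq ι]
    [CommGroupWithZero K] {f : ι → K} (hf : ∀ i, f i ≠ 0) (s : Finset ι) :
    (∏ i ∈ s, (f i)⁻¹) * ∏ i, f i = ∏ i ∈ sᶜ, f i := by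
  rw [← Finset.prod_mul_prod_compl s f, ← mul_assoc, ← Finset.prod_mul_distrib,
    Finset.prod_congr rfl fun i _ => inv_mul_cancel₀ (hf i), Finset.prod_const_one, one_mul]

theorem Fintype.card_add_ncard_of_range_eq_compl {α β : Type*} [Fintype α] [Fintype β]
    {f : α → β} (hf : Injective f) {T : Set β} (h : Set.range f = Tᶜ) :
    Fintype.card α + T.ncard = Fintype.card β := by
  rw [← Nat.card_eq_fintype_card, ← Nat.card_eq_fintype_card, ← Nat.card_range_of_injective hf,
    h, Nat.card_coe_set_eq, add_comm, Set.ncard_add_ncard_compl]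

namespace Matrix

variable {R E K : Type*} [Fintype R] [DecidableEq R] [CommRing K]

theorem det_mul_eq_sum_prod_mul_det_submatrix [Fintype E] (A : Matrix R E K)
    (B : Matrix E R K) :
    (A * B).det = ∑ u : R → E, (∏ i, A i (u i)) * (B.submatrix u id).det := by
  have hrows : A * B = fun i => ∑ e, A i e • B e := by
    ext i j
    simp [mul_apply]
  change detRowAlternating.toMultilinearMap (A * B) = _
  rw [hrows, MultilinearMap.map_sum]
  refine Finset.sum_congr rfl fun u _ => ?_
  rw [MultilinearMap.map_smul_univ]
  rfl

theorem sum_perm_prod_mul_det_submatrix (A : Matrix R E K) (B : Matrix E R K) (u : R → E) :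
    ∑ π : Equiv.Perm R, (∏ i, A i (u (π i))) * (B.submatrix (u ∘ π) id).det
      = (A.submatrix id u).det * (B.submatrix u id).det := by
  have hB : ∀ π : Equiv.Perm R, (B.submatrix (u ∘ π) id).det
      = Equiv.Perm.sign π * (B.submatrix u id).det := fun π =>
    det_permute π (B.submatrix u id)
  rw [← det_transpose (A.submatrix id u), det_apply', Finset.sum_mul]
  refine Finset.sum_congr rfl fun π _ => ?_
  rw [hB]
  simp only [transpose_apply, submatrix_apply, id]
  ring

theorem sum_image_eq_det_mul_det [Fintype E] [DecidableEq E] (A : Matrix R E K)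
    (B : Matrix E R K) {u : R → E} (hu : Injective u) :
    ∑ v : R → E with Finset.univ.image v = Finset.univ.image u,
        (∏ i, A i (v i)) * (B.submatrix v id).det
      = (A.submatrix id u).det * (B.submatrix u id).det := by
  rw [← sum_perm_prod_mul_det_submatrix]
  symm
  refine Finset.sum_bij (fun π _ => u ∘ π) (fun π _ => ?_)
    (fun π _ π' _ h => Equiv.ext fun r => hu (congrFun h r)) (fun v hv => ?_) (fun _ _ => rfl)
  · simp only [Finset.mem_filter, Finset.mem_univ, true_and]
    rw [← Finset.image_image, Finset.image_univ_equiv]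
  · simp only [Finset.mem_filter, Finset.mem_univ, true_and] at hv
    have hvinj : Injective v := by
      have hcard := Finset.card_image_of_injective Finset.univ hu
      rw [← hv, Finset.card_image_iff, Finset.coe_univ] at hcard
      exact Set.injOn_univ.mp hcard
    choose g hg using fun r => Finset.mem_image.mp (hv ▸ Finset.mem_image_of_mem v
      (Finset.mem_univ r))
    have hginj : Injective g := fun r r' h => hvinj (by rw [← (hg r).2, ← (hg r').2, h])
    exact ⟨Equiv.ofBijective g (Finite.injective_iff_bijective.mp hginj), Finset.mem_univ _,
      funext fun r => (hg r).2⟩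

theorem sum_image_eq_zero_of_card_ne [Fintype E] [DecidableEq E] (A : Matrix R E K)
    (B : Matrix E R K) {S : Finset E} (hS : S.card ≠ Fintype.card R) :
    ∑ v : R → E with Finset.univ.image v = S, (∏ i, A i (v i)) * (B.submatrix v id).det = 0 := by
  refine Finset.sum_eq_zero fun v hv => ?_
  obtain ⟨i, j, hvij, hij⟩ : ∃ i j, v i = v j ∧ i ≠ j := by
    by_contra! hinj
    rw [← (Finset.mem_filter.mp hv).2, Finset.card_image_of_injective _
      fun i j h => hinj i j h] at hS
    exact hS Finset.card_univ
  rw [det_zero_of_row_eq hij (by ext; simp [hvij]), mul_zero]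

theorem det_succ_column_of_forall_ne_eq_zero {n : ℕ} (A : Matrix (Fin (n + 1)) (Fin (n + 1)) K)
    {i₀ j₀ : Fin (n + 1)} (h : ∀ i ≠ i₀, A i j₀ = 0) :
    A.det = (-1) ^ (i₀ + j₀ : ℕ) * A i₀ j₀ * (A.submatrix i₀.succAbove j₀.succAbove).det := by
  rw [det_succ_column A j₀, Finset.sum_eq_single i₀ (fun i _ hi => by rw [h i hi]; ring)
    (fun h => absurd (Finset.mem_univ i₀) h)]

theorem det_updateRow_single_self (A : Matrix R R K) (i : R) :
    (A.updateRow i (Pi.single i 1)).det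
      = (A.submatrix (Subtype.val : {j // j ≠ i} → R) Subtype.val).det := by
  let e := Equiv.sumCompl (· = i)
  have hblocks : (A.updateRow i (Pi.single i 1)).submatrix e e
      = fromBlocks 1 0 (of fun (j : {j // j ≠ i}) (_ : {j // j = i}) => A j i)
          (A.submatrix Subtype.val Subtype.val) := by
    ext (j | j) (j' | j')
    · simp [e, j'.2, Subsingleton.elim j j']
    · simp [e, j.2, j'.2]
    · simp [e, j.2, j'.2]
    · simp [e, j.2]
  rw [← det_submatrix_equiv_self e, hblocks, det_fromBlocks_zero₁₂, det_one, one_mul]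

theorem inv_apply_self_eq_det_submatrix_div {F : Type*} [Field F] (A : Matrix R R F) (i : R) :
    A⁻¹ i i = (A.submatrix (Subtype.val : {j // j ≠ i} → R) Subtype.val).det / A.det := by
  rw [inv_def, smul_apply, adjugate_apply, det_updateRow_single_self, Ring.inverse_eq_inv',
    smul_eq_mul, div_eq_inv_mul]

end Matrix

namespace WMG

section Walks

variable {V E : Type} {G : WMG V E} {S : Set E} {T : Set V}

theorem step_ends {e : E} (he : e ∈ S) : G.Step S (G.ends e).1 (G.ends e).2 :=
  ⟨e, he, Or.inl rfl⟩

instance : Std.Symm (G.Step S) where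
  symm _ _ := fun ⟨e, he, h⟩ => ⟨e, he, h.symm⟩

/-- With `#S = #Tᶜ`, this says that `S` is a spanning forest each of whose trees contains exactly
one vertex of `T`. -/
def Reaches (G : WMG V E) (S : Set E) (T : Set V) : Prop :=
  ∀ x, ∃ t ∈ T, Relation.ReflTransGen (G.Step S) x t

theorem Reaches.mono {S' : Set E} {T' : Set V} (h : G.Reaches S T) (hS : S ⊆ S') (hT : T ⊆ T') :
    G.Reaches S' T' := fun x =>
  let ⟨t, ht, hxt⟩ := h x
  ⟨t, hT ht, Relation.ReflTransGen.mono (fun _ _ ⟨e, he, h⟩ => ⟨e, hS he, h⟩) _ _ hxt⟩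

/-- A walk into `T` can be cut at the first use of an edge with both ends in `T`. -/
theorem Reaches.sdiff_singleton {e : E} (h : G.Reaches S T) (h₁ : (G.ends e).1 ∈ T)
    (h₂ : (G.ends e).2 ∈ T) : G.Reaches (S \ {e}) T := by
  intro x
  obtain ⟨t, ht, hxt⟩ := h x
  induction hxt using Relation.ReflTransGen.head_induction_on with
  | refl => exact ⟨t, ht, .refl⟩
  | @head y z hyz _ ih =>
    obtain ⟨f, hf, hends⟩ := hyz
    by_cases hfe : f = e
    · subst hfe
      rcases hends with hends | hends
      · exact ⟨y, by simpa [hends] using h₁, .refl⟩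
      · exact ⟨y, by simpa [hends] using h₂, .refl⟩
    · obtain ⟨t', ht', hzt'⟩ := ih
      exact ⟨t', ht', .head ⟨f, ⟨hf, hfe⟩, hends⟩ hzt'⟩

theorem connectedVia_iff_reaches_singleton (p : V) :
    G.ConnectedVia S ↔ G.Reaches S {p} := by
  refine ⟨fun h x => ⟨p, rfl, h x p⟩, fun h x y => ?_⟩
  obtain ⟨_, rfl, hx⟩ := h x
  obtain ⟨_, rfl, hy⟩ := h y
  exact hx.trans (Std.Symm.symm _ _ hy)

end Walks

section Laplacian

variable {V E : Type} [DecidableEq V] (G : WMG V E)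

noncomputable def incMat : Matrix V E ℝ :=
  Matrix.of fun x e => (if (G.ends e).1 = x then 1 else 0) - (if (G.ends e).2 = x then 1 else 0)

theorem incMat_apply_eq_zero {x : V} {e : E} (h₁ : (G.ends e).1 ≠ x) (h₂ : (G.ends e).2 ≠ x) :
    G.incMat x e = 0 := by
  simp [incMat, h₁, h₂]

theorem vecMul_incMat [Fintype V] (v : V → ℝ) (e : E) :
    (v ᵥ* G.incMat) e = v (G.ends e).1 - v (G.ends e).2 := by
  simp [Matrix.vecMul, dotProduct, incMat, mul_sub, Finset.sum_sub_distrib]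

theorem lap_eq [Fintype E] (ℓ : E → ℝ) :
    G.lap ℓ = G.incMat * Matrix.diagonal (fun e => (ℓ e)⁻¹) * G.incMatᵀ := by
  ext x y
  rw [Matrix.mul_apply]
  simp only [lap, incMat, Matrix.mul_diagonal, Matrix.transpose_apply, Matrix.of_apply]
  split_ifs with hxy
  · subst hxy
    refine Finset.sum_congr rfl fun e _ => ?_
    by_cases h₁ : (G.ends e).1 = x <;> by_cases h₂ : (G.ends e).2 = x <;> simp_all [eq_comm]
  · rw [← Finset.sum_neg_distrib]
    refine Finset.sum_congr rfl fun e _ => ?_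
    by_cases h₁ : (G.ends e).1 = x <;> by_cases h₂ : (G.ends e).2 = x <;>
      by_cases h₃ : (G.ends e).1 = y <;> by_cases h₄ : (G.ends e).2 = y <;>
      simp_all [Prod.ext_iff]

variable [Fintype V] [Fintype E]

theorem dotProduct_lap_mulVec (ℓ : E → ℝ) (v : V → ℝ) :
    v ⬝ᵥ (G.lap ℓ *ᵥ v) = ∑ e, (ℓ e)⁻¹ * (v (G.ends e).1 - v (G.ends e).2) ^ 2 := by
  rw [lap_eq, ← Matrix.mulVec_mulVec, ← Matrix.mulVec_mulVec, Matrix.dotProduct_mulVec,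
    Matrix.mulVec_transpose]
  simp only [dotProduct, Matrix.mulVec_diagonal, vecMul_incMat]
  exact Finset.sum_congr rfl fun e _ => by ring

theorem sum_lap_mulVec (ℓ : E → ℝ) (v : V → ℝ) : ∑ x, (G.lap ℓ *ᵥ v) x = 0 := by
  have h1 : (1 : V → ℝ) ᵥ* G.incMat = 0 := funext fun e => by simp [vecMul_incMat]
  rw [← one_dotProduct, lap_eq, ← Matrix.mulVec_mulVec, ← Matrix.mulVec_mulVec,
    Matrix.dotProduct_mulVec, h1, zero_dotProduct]

theorem eq_of_lap_mulVec_eq_zero {ℓ : E → ℝ} (hG : G.Connected) (hℓ : ∀ e, 0 < ℓ e) {v : V → ℝ}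
    (hv : G.lap ℓ *ᵥ v = 0) (x y : V) : v x = v y := by
  have hsum := G.dotProduct_lap_mulVec ℓ v
  rw [hv, dotProduct_zero, eq_comm, Finset.sum_eq_zero_iff_of_nonneg
    fun e _ => mul_nonneg (inv_nonneg.mpr (hℓ e).le) (sq_nonneg _)] at hsum
  have hedge : ∀ e, v (G.ends e).1 = v (G.ends e).2 := fun e => by
    have := hsum e (Finset.mem_univ e)
    rw [mul_eq_zero, or_iff_right (inv_ne_zero (hℓ e).ne'), sq_eq_zero_iff, sub_eq_zero] at this
    exact this
  refine Relation.ReflTransGen.apply_eq_of_forall_rel ?_ (hG x y)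
  rintro _ _ ⟨e, -, h | h⟩ <;> have := hedge e <;> simp only [h] at this
  exacts [this, this.symm]

end Laplacian

section MatrixTree

variable {V E : Type} [DecidableEq V] (G : WMG V E) {R : Type*} [Fintype R] [DecidableEq R]

/-- The indicator of the vertices that cannot escape `range ι` is a left null vector. -/
theorem det_incMat_submatrix_eq_zero [Fintype V] {ι : R → V} (hι : Injective ι) {u : R → E}
    (h : ¬ G.Reaches (Set.range u) (Set.range ι)ᶜ) : (G.incMat.submatrix ι u).det = 0 := by
  simp only [Reaches, not_forall, not_exists, not_and] at h
  obtain ⟨x, hx⟩ := h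
  set C : Set V :=
    {y | ∀ t ∈ (Set.range ι)ᶜ, ¬ Relation.ReflTransGen (G.Step (Set.range u)) y t}
  have hCι : C ⊆ Set.range ι := fun y hy => by_contra fun hy' => hy y hy' .refl
  have hends : ∀ j, (G.ends (u j)).1 ∈ C ↔ (G.ends (u j)).2 ∈ C := fun j => by
    have hs : G.Step (Set.range u) (G.ends (u j)).1 (G.ends (u j)).2 :=
      step_ends (Set.mem_range_self j)
    exact ⟨fun h t ht hr => h t ht (.head hs hr),
      fun h t ht hr => h t ht (.head (Std.Symm.symm _ _ hs) hr)⟩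
  set χ : V → ℝ := C.indicator 1
  refine Matrix.exists_vecMul_eq_zero_iff.mp ⟨χ ∘ ι, fun h0 => ?_, ?_⟩
  · have hxC : x ∈ C := hx
    obtain ⟨i, rfl⟩ := hCι hxC
    simpa [χ, Set.indicator_of_mem hxC] using congrFun h0 i
  · ext j
    have hsum : ((χ ∘ ι) ᵥ* G.incMat.submatrix ι u) j = (χ ᵥ* G.incMat) (u j) :=
      Fintype.sum_of_injective ι hι _ (fun y => χ y * G.incMat y (u j))
        (fun y hy => by simp [χ, Set.indicator_of_notMem (fun h => hy (hCι h))]) fun _ => rfl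
    rw [hsum, vecMul_incMat]
    by_cases h₁ : (G.ends (u j)).1 ∈ C
    · simp [χ, h₁, (hends j).mp h₁]
    · simp [χ, h₁, mt (hends j).mpr h₁]

/-- An edge leaving `range ρ` gives a column with a single nonzero entry `±1`; expand along it. -/
theorem sq_det_incMat_submatrix_fin_eq_one : ∀ {n : ℕ} {ρ : Fin n → V} {σ : Fin n → E},
    Injective ρ → Injective σ → G.Reaches (Set.range σ) (Set.range ρ)ᶜ →
    (G.incMat.submatrix ρ σ).det ^ 2 = 1
  | 0, _, _, _, _, _ => by simp
  | n + 1, ρ, σ, hρ, hσ, h => by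
    obtain ⟨t, ht, hreach⟩ := h (ρ 0)
    obtain ⟨_, hy, z, hz, f, ⟨j₀, rfl⟩, hf⟩ :=
      hreach.exists_rel_of_notMem_of_mem (not_not.mpr (Set.mem_range_self 0)) ht
    obtain ⟨i₀, rfl⟩ := not_not.mp hy
    have hz' : ∀ i, z ≠ ρ i := fun i h => hz ⟨i, h.symm⟩
    have hz'' : ∀ i, ρ i ≠ z := fun i h => hz ⟨i, h⟩
    have hpivot : G.incMat (ρ i₀) (σ j₀) ^ 2 = 1 := by
      rcases hf with hf | hf <;> simp [incMat, hf, hz']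
    have hcol : ∀ i ≠ i₀, G.incMat.submatrix ρ σ i j₀ = 0 := fun i hi => by
      have hne : ρ i₀ ≠ ρ i := hρ.ne (Ne.symm hi)
      rcases hf with hf | hf <;>
        exact G.incMat_apply_eq_zero (by simp [hf, hne, hz']) (by simp [hf, hne, hz'])
    have hminor : G.Reaches (Set.range (σ ∘ j₀.succAbove)) (Set.range (ρ ∘ i₀.succAbove))ᶜ := by
      rw [Fin.range_comp_succAbove hρ, Fin.range_comp_succAbove hσ]
      refine (h.mono subset_rfl (Set.compl_subset_compl.mpr Set.sdiff_subset)).sdiff_singleton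
        ?_ ?_ <;> rcases hf with hf | hf <;> simp [hf, hz'']
    have hsign : ((-1 : ℝ) ^ (i₀ + j₀ : ℕ)) ^ 2 = 1 := by
      rw [← pow_mul, pow_mul', neg_one_sq, one_pow]
    rw [Matrix.det_succ_column_of_forall_ne_eq_zero _ hcol, mul_pow, mul_pow, hsign, one_mul]
    exact congrArg₂ (· * ·) hpivot (sq_det_incMat_submatrix_fin_eq_one
      (hρ.comp Fin.succAbove_right_injective) (hσ.comp Fin.succAbove_right_injective) hminor)
      |>.trans (one_mul 1)

theorem sq_det_incMat_submatrix_eq_one {ι : R → V} (hι : Injective ι) {u : R → E}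
    (hu : Injective u) (h : G.Reaches (Set.range u) (Set.range ι)ᶜ) :
    (G.incMat.submatrix ι u).det ^ 2 = 1 := by
  let e := (Fintype.equivFin R).symm
  rw [← Matrix.det_submatrix_equiv_self e]
  refine G.sq_det_incMat_submatrix_fin_eq_one (hι.comp e.injective) (hu.comp e.injective) ?_
  change G.Reaches (Set.range (u ∘ e)) (Set.range (ι ∘ e))ᶜ
  rwa [e.surjective.range_comp, e.surjective.range_comp]

/-- The all-minors matrix-tree theorem. -/
theorem det_lap_submatrix [Fintype V] [Fintype E] (ℓ : E → ℝ) {ι : R → V} (hι : Injective ι) :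
    ((G.lap ℓ).submatrix ι ι).det = ∑ S : Finset E,
      if S.card = Fintype.card R ∧ G.Reaches S (Set.range ι)ᶜ then ∏ e ∈ S, (ℓ e)⁻¹ else 0 := by
  set N := G.incMat.submatrix ι id
  have hlap : (G.lap ℓ).submatrix ι ι = (N * Matrix.diagonal fun e => (ℓ e)⁻¹) * Nᵀ := by
    rw [lap_eq, Matrix.submatrix_mul _ _ _ id _ bijective_id,
      Matrix.submatrix_mul _ _ _ id _ bijective_id]
    rfl
  rw [hlap, Matrix.det_mul_eq_sum_prod_mul_det_submatrix,
    ← Finset.sum_fiberwise_of_maps_to (g := fun u => Finset.univ.image u) (t := Finset.univ)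
      fun _ _ => Finset.mem_univ _]
  refine Finset.sum_congr rfl fun S _ => ?_
  by_cases hS : S.card = Fintype.card R
  · obtain ⟨u, hu, rfl⟩ := Finset.exists_injective_image_univ_eq hS
    rw [Matrix.sum_image_eq_det_mul_det _ _ hu, Finset.prod_image fun _ _ _ _ h => hu h,
      Finset.coe_image, Finset.coe_univ, Set.image_univ]
    have hminor : ((N * Matrix.diagonal fun e => (ℓ e)⁻¹).submatrix id u).det
        = (∏ i, (ℓ (u i))⁻¹) * (G.incMat.submatrix ι u).det := by
      rw [← Matrix.det_mul_row]
      congr 1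
      ext i j
      simp [N, mul_comm]
    have hN : N.submatrix id u = G.incMat.submatrix ι u := rfl
    rw [hminor, ← Matrix.transpose_submatrix, Matrix.det_transpose, hN, mul_assoc, ← sq]
    by_cases hR : G.Reaches (Set.range u) (Set.range ι)ᶜ
    · rw [if_pos ⟨hS, hR⟩, G.sq_det_incMat_submatrix_eq_one hι hu hR, mul_one]
    · rw [if_neg (fun h => hR h.2)]
      simp [G.det_incMat_submatrix_eq_zero hι hR]
  · rw [if_neg (fun h => hS h.1), Matrix.sum_image_eq_zero_of_card_ne _ _ hS]

variable {G} in
/-- A zero column would contradict `sq_det_incMat_submatrix_eq_one`. -/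
theorem Reaches.exists_end_mem_range {ι : R → V} (hι : Injective ι) {u : R → E}
    (hu : Injective u) (h : G.Reaches (Set.range u) (Set.range ι)ᶜ) (j : R) :
    (G.ends (u j)).1 ∈ Set.range ι ∨ (G.ends (u j)).2 ∈ Set.range ι := by
  by_contra! hj
  have hzero : (G.incMat.submatrix ι u).det = 0 :=
    Matrix.det_eq_zero_of_column_eq_zero j fun i => G.incMat_apply_eq_zero
      (fun h => hj.1 ⟨i, h.symm⟩) (fun h => hj.2 ⟨i, h.symm⟩)
  simpa [hzero] using G.sq_det_incMat_submatrix_eq_one hι hu h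

end MatrixTree

section SpanningTrees

variable {V E : Type} [Fintype V] [DecidableEq E] (G : WMG V E)

theorem mul_eta_update_zero [Fintype E] (ℓ : E → ℝ) (k : E) :
    ℓ k * G.eta (Function.update ℓ k 0)
      = ∑ T with G.IsSpanningTree T ∧ k ∈ T, ℓ k * ∏ e ∈ Tᶜ, ℓ e := by
  rw [eta, Finset.mul_sum, Finset.sum_filter]
  refine Finset.sum_congr rfl fun T _ => ?_
  by_cases hT : G.IsSpanningTree T
  · by_cases hkT : k ∈ T
    · rw [if_pos hT, if_pos ⟨hT, hkT⟩,
        Finset.prod_update_of_notMem (Finset.notMem_compl.mpr hkT)]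
    · rw [if_pos hT, if_neg (fun h => hkT h.2),
        Finset.prod_update_of_mem (Finset.mem_compl.mpr hkT), zero_mul, mul_zero]
  · rw [if_neg hT, if_neg (fun h => hT h.1), mul_zero]

theorem isSpanningTree_insert {S : Finset E} {k : E} (hcard : S.card + 2 = Fintype.card V)
    (hkS : k ∉ S) (h : G.Reaches S {(G.ends k).1, (G.ends k).2}) :
    G.IsSpanningTree (insert k S) := by
  refine ⟨by rw [Finset.card_insert_of_notMem hkS]; omega, ?_⟩
  rw [connectedVia_iff_reaches_singleton (G.ends k).1]
  intro x
  obtain ⟨t, ht, hxt⟩ :=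
    h.mono (Finset.coe_subset.mpr (Finset.subset_insert k S)) subset_rfl x
  rcases ht with rfl | rfl
  · exact ⟨_, rfl, hxt⟩
  · exact ⟨_, rfl, hxt.tail (Std.Symm.symm _ _ (step_ends (by simp)))⟩

variable {G} in
theorem IsSpanningTree.reaches_erase {T : Finset E} (hT : G.IsSpanningTree T) (k : E) :
    G.Reaches (T.erase k) {(G.ends k).1, (G.ends k).2} := by
  rw [Finset.coe_erase]
  exact (((connectedVia_iff_reaches_singleton (G.ends k).1).mp hT.2).mono subset_rfl
    (by simp)).sdiff_singleton (by simp) (by simp)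

end SpanningTrees

section Minors

variable {V E : Type} [Fintype V] [DecidableEq V] [Fintype E] [DecidableEq E] (G : WMG V E)
  {R : Type*} [Fintype R] [DecidableEq R] {ℓ : E → ℝ}

theorem det_lap_submatrix_mul_prod_of_range_eq_compl_singleton {ι : R → V} (hι : Injective ι)
    {p : V} (hrange : Set.range ι = {p}ᶜ) (hℓ : ∀ e, ℓ e ≠ 0) :
    ((G.lap ℓ).submatrix ι ι).det * ∏ e, ℓ e = G.eta ℓ := by
  have hcard := Fintype.card_add_ncard_of_range_eq_compl hι hrange
  rw [Set.ncard_singleton] at hcard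
  rw [G.det_lap_submatrix ℓ hι, Finset.sum_mul, eta]
  refine Finset.sum_congr rfl fun S _ => ?_
  have htree : (S.card = Fintype.card R ∧ G.Reaches S (Set.range ι)ᶜ) ↔ G.IsSpanningTree S := by
    rw [hrange, compl_compl, IsSpanningTree, ← connectedVia_iff_reaches_singleton]
    exact and_congr_left' (by omega)
  split_ifs with h h' h'
  · exact Finset.prod_inv_mul_prod_eq_prod_compl hℓ S
  · exact absurd (htree.mp h) h'
  · exact absurd (htree.mpr h') h
  · exact zero_mul _

/-- The forests counted by the minor are the `T \ {k}` for spanning trees `T ∋ k`. -/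
theorem det_lap_submatrix_mul_prod_of_range_eq_compl_pair {ι : R → V} (hι : Injective ι)
    {k : E} (hk : (G.ends k).1 ≠ (G.ends k).2)
    (hrange : Set.range ι = {(G.ends k).1, (G.ends k).2}ᶜ) (hℓ : ∀ e, ℓ e ≠ 0) :
    ((G.lap ℓ).submatrix ι ι).det * ∏ e, ℓ e = ℓ k * G.eta (Function.update ℓ k 0) := by
  have hcard := Fintype.card_add_ncard_of_range_eq_compl hι hrange
  rw [Set.ncard_pair hk] at hcard
  set IsGood := fun S : Finset E => S.card = Fintype.card R ∧ G.Reaches S (Set.range ι)ᶜ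
  have hk_not_mem : ∀ S, IsGood S → k ∉ S := by
    rintro S ⟨hS, hR⟩ hkS
    obtain ⟨u, hu, rfl⟩ := Finset.exists_injective_image_univ_eq hS
    obtain ⟨j, -, rfl⟩ := Finset.mem_image.mp hkS
    rw [Finset.coe_image, Finset.coe_univ, Set.image_univ] at hR
    simpa [hrange] using hR.exists_end_mem_range hι hu j
  calc ((G.lap ℓ).submatrix ι ι).det * ∏ e, ℓ e
      = ∑ S with IsGood S, ∏ e ∈ Sᶜ, ℓ e := by
        rw [G.det_lap_submatrix ℓ hι, Finset.sum_mul, Finset.sum_filter]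
        refine Finset.sum_congr rfl fun S _ => ?_
        split_ifs
        exacts [Finset.prod_inv_mul_prod_eq_prod_compl hℓ S, zero_mul _]
    _ = ∑ T with G.IsSpanningTree T ∧ k ∈ T, ℓ k * ∏ e ∈ Tᶜ, ℓ e := by
        refine Finset.sum_bij' (fun S _ => insert k S) (fun T _ => T.erase k)
          (fun S hS => ?_) (fun T hT => ?_) (fun S hS => ?_) (fun T hT => ?_) (fun S hS => ?_)
          <;> simp only [Finset.mem_filter, Finset.mem_univ, true_and] at *
        · have hkS := hk_not_mem S hS
          obtain ⟨hS, hR⟩ := hS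
          rw [hrange, compl_compl] at hR
          exact ⟨G.isSpanningTree_insert (by omega) hkS hR, Finset.mem_insert_self k S⟩
        · have hT₁ := hT.1.1
          refine ⟨by rw [Finset.card_erase_of_mem hT.2]; omega, ?_⟩
          rw [hrange, compl_compl]
          exact hT.1.reaches_erase k
        · exact Finset.erase_insert (hk_not_mem S hS)
        · exact Finset.insert_erase hT.2
        · rw [Finset.compl_insert, Finset.mul_prod_erase _ _
            (Finset.mem_compl.mpr (hk_not_mem S hS))]
    _ = ℓ k * G.eta (Function.update ℓ k 0) := (G.mul_eta_update_zero ℓ k).symm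

end Minors

section Resistance

variable {V E : Type} [Fintype V] [DecidableEq V] [Fintype E] (G : WMG V E) {ℓ : E → ℝ}

theorem lap_mulVec_extend_val {b : V} {y : {x // x ≠ b} → ℝ} {f : V → ℝ} (hf : ∑ x, f x = 0)
    (hy : (G.lap ℓ).submatrix Subtype.val Subtype.val *ᵥ y = fun i : {x // x ≠ b} => f i) :
    G.lap ℓ *ᵥ extend Subtype.val y 0 = f := by
  have hrows : ∀ i : {x // x ≠ b}, (G.lap ℓ *ᵥ extend Subtype.val y 0) i = f i := fun i => by
    rw [← congrFun hy i]
    refine (Fintype.sum_of_injective _ Subtype.val_injective _ _ (fun x hx => ?_)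
      fun j => by simp).symm
    rw [extend_apply' _ _ _ (fun ⟨j, hj⟩ => hx ⟨j, hj⟩), Pi.zero_apply, mul_zero]
  funext x
  by_cases hx : x = b
  · subst hx
    have hsum := G.sum_lap_mulVec ℓ (extend Subtype.val y 0)
    rw [← hf, ← sub_eq_zero, ← Finset.sum_sub_distrib, Finset.sum_eq_single x
      (fun z _ hz => sub_eq_zero.mpr (hrows ⟨z, hz⟩)) (by simp)] at hsum
    exact sub_eq_zero.mp hsum
  · exact hrows ⟨x, hx⟩

theorem det_lap_submatrix_ne_zero (hG : G.Connected) (hℓ : ∀ e, 0 < ℓ e) (b : V) :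
    ((G.lap ℓ).submatrix (Subtype.val : {x // x ≠ b} → V) Subtype.val).det ≠ 0 := by
  intro h0
  obtain ⟨y, hy0, hy⟩ := Matrix.exists_mulVec_eq_zero_iff.mpr h0
  have hv := G.lap_mulVec_extend_val (f := 0) (by simp) hy
  refine hy0 (funext fun i => ?_)
  have := G.eq_of_lap_mulVec_eq_zero hG hℓ hv i b
  rwa [Subtype.val_injective.extend_apply, extend_apply' _ _ _ (fun ⟨j, hj⟩ => j.2 hj)] at this

theorem res_eq_of_lap_mulVec (hG : G.Connected) (hℓ : ∀ e, 0 < ℓ e) {a b : V} {v : V → ℝ}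
    (hv : G.lap ℓ *ᵥ v = delta a - delta b) (hvb : v b = 0) : G.res ℓ a b = v a := by
  have huniq : ∀ w : V → ℝ, G.lap ℓ *ᵥ w = delta a - delta b ∧ w b = 0 → w = v := by
    rintro w ⟨hw, hwb⟩
    funext x
    have := G.eq_of_lap_mulVec_eq_zero hG hℓ (v := w - v)
      (by rw [Matrix.mulVec_sub, hw, hv, sub_self]) x b
    rwa [Pi.sub_apply, Pi.sub_apply, hwb, hvb, sub_zero, sub_eq_zero] at this
  have hex : ∃! w : V → ℝ, G.lap ℓ *ᵥ w = delta a - delta b ∧ w b = 0 := ⟨v, ⟨hv, hvb⟩, huniq⟩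
  rw [res, dif_pos hex, huniq _ hex.exists.choose_spec]

/-- Cramer's rule for the grounded Laplacian. -/
theorem res_mul_det_lap_submatrix (hG : G.Connected) (hℓ : ∀ e, 0 < ℓ e) {a b : V}
    (hab : a ≠ b) :
    G.res ℓ a b * ((G.lap ℓ).submatrix (Subtype.val : {x // x ≠ b} → V) Subtype.val).det
      = (((G.lap ℓ).submatrix (Subtype.val : {x // x ≠ b} → V) Subtype.val).submatrix
          (Subtype.val : {x // x ≠ ⟨a, hab⟩} → _) Subtype.val).det := by
  set Q := (G.lap ℓ).submatrix (Subtype.val : {x // x ≠ b} → V) Subtype.val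
  have hQ := G.det_lap_submatrix_ne_zero hG hℓ b
  set y := Q⁻¹ *ᵥ Pi.single ⟨a, hab⟩ 1 with hy_def
  have hy : Q *ᵥ y = fun i : {x // x ≠ b} => (delta a - delta b) i := by
    rw [Matrix.mulVec_mulVec, Matrix.mul_nonsing_inv _ (isUnit_iff_ne_zero.mpr hQ),
      Matrix.one_mulVec]
    funext i
    simp [delta, Pi.single_apply, i.2, Subtype.ext_iff]
  have hv := G.lap_mulVec_extend_val (by simp [delta, Finset.sum_sub_distrib]) hy
  have hya : extend Subtype.val y 0 a = y ⟨a, hab⟩ :=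
    Subtype.val_injective.extend_apply y 0 ⟨a, hab⟩
  rw [G.res_eq_of_lap_mulVec hG hℓ hv (extend_apply' _ _ _ (fun ⟨j, hj⟩ => j.2 hj)), hya, hy_def,
    Matrix.mulVec_single_one, Matrix.col_apply, Matrix.inv_apply_self_eq_det_submatrix_div,
    div_mul_cancel₀ _ hQ]

end Resistance

end WMG

/-- Let `G` be a connected weighted multigraph and `e_k` an edge with distinct endpoints
`p_i`, `p_j`.  Then for all positive edge lengths,
`r(p_i, p_j) · η_G(ℓ) = ℓ_k · (η_G(ℓ)|_{ℓ_k = 0})`; in particular `ℓ_k` divides the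
polynomial `r(p_i, p_j) · η_G` and the quotient is `η_G` evaluated at `ℓ_k = 0`. -/
theorem stmt_5 {V E : Type} [Fintype V] [DecidableEq V] [Fintype E] [DecidableEq E]
    (G : WMG V E) (hG : G.Connected) (k : E) (hk : (G.ends k).1 ≠ (G.ends k).2)
    (ℓ : E → ℝ) (hℓ : ∀ k', 0 < ℓ k') :
    G.res ℓ (G.ends k).1 (G.ends k).2 * G.eta ℓ
      = ℓ k * G.eta (Function.update ℓ k 0) := by
  have hℓ₀ : ∀ e, ℓ e ≠ 0 := fun e => (hℓ e).ne'
  have hrange₁ : Set.range (Subtype.val : {x // x ≠ (G.ends k).2} → V) = {(G.ends k).2}ᶜ := by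
    ext; simp
  have hrange₂ : Set.range (Subtype.val ∘ Subtype.val :
        {x : {x // x ≠ (G.ends k).2} // x ≠ ⟨(G.ends k).1, hk⟩} → V)
      = {(G.ends k).1, (G.ends k).2}ᶜ := by
    ext; simp [Subtype.ext_iff, and_comm]
  rw [← G.det_lap_submatrix_mul_prod_of_range_eq_compl_singleton Subtype.val_injective hrange₁ hℓ₀,
    ← mul_assoc, G.res_mul_det_lap_submatrix hG hℓ hk, Matrix.submatrix_submatrix]
  exact G.det_lap_submatrix_mul_prod_of_range_eq_compl_pair
    (Subtype.val_injective.comp Subtype.val_injective) hk hrange₂ hℓ₀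
end

section
/- Let g ≥ 2 be an integer and let G be the weighted multigraph with two vertices p_1, p_2 joined by two parallel edges of positive lengths ℓ_1, ℓ_2 (so the underlying metric graph is a circle of circumference ℓ_1 + ℓ_2), polarized by q(p_1) = g − 1 and q(p_2) = 0 (a polarized graph of genus g). Then φ(G) = ((g−1)/(6g))·(ℓ_1 + ℓ_2). -/
open scoped Classical
open Matrix Filter Topology

/-- The weighted multigraph with two vertices joined by two parallel edges
(a circle of circumference `ℓ_1 + ℓ_2`). -/
def twoBanana : WMG (Fin 2) (Fin 2) := ⟨fun _ => ((0 : Fin 2), (1 : Fin 2))⟩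

/-!
The two vertices are joined by parallel edges, so r(p_1, p_2) = ℓ_1 ℓ_2 / (ℓ_1 + ℓ_2) and
F(e_k) = ℓ_k / (ℓ_1 + ℓ_2); in particular Σ_k F(e_k) = 1 and Σ_k F(e_k)² ℓ_k = ℓ(G) − 3 r(p_1, p_2).
Substituting into the formulas for ε and r(K, K), with K = 2q, gives for every polarization of
genus g ≥ 2
  φ(G) = (g − 1) ℓ(G) / (6g) + 2 q(p_1) q(p_2) r(p_1, p_2) / g,
and the second term vanishes when q(p_2) = 0.
-/

namespace WMG

variable {V E : Type} [Fintype V] [DecidableEq V] [Fintype E]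

theorem res_eq_of_forall_iff (G : WMG V E) (ℓ : E → ℝ) {a b : V} (v : V → ℝ)
    (hv : ∀ w, G.lap ℓ *ᵥ w = delta a - delta b ∧ w b = 0 ↔ w = v) :
    G.res ℓ a b = v a := by
  have h : ∃! w : V → ℝ, G.lap ℓ *ᵥ w = delta a - delta b ∧ w b = 0 :=
    ⟨v, (hv v).2 rfl, fun w hw => (hv w).1 hw⟩
  rw [res, dif_pos h, (hv _).1 h.exists.choose_spec]

end WMG

section twoBanana

variable (ℓ : Fin 2 → ℝ)

theorem twoBanana_ends (k : Fin 2) : twoBanana.ends k = (0, 1) := rfl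

theorem twoBanana_lap_mulVec (w : Fin 2 → ℝ) (x : Fin 2) :
    (twoBanana.lap ℓ *ᵥ w) x = ((ℓ 0)⁻¹ + (ℓ 1)⁻¹) * (w x - w (x + 1)) := by
  fin_cases x <;>
    simp [twoBanana, WMG.lap, Matrix.mulVec, dotProduct, Fin.sum_univ_two, Prod.ext_iff] <;> ring

theorem twoBanana_res (hℓ : ∀ k, 0 < ℓ k) (a b : Fin 2) :
    twoBanana.res ℓ a b = if a = b then 0 else ℓ 0 * ℓ 1 / (ℓ 0 + ℓ 1) := by
  have := hℓ 0
  have := hℓ 1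
  have hc : ((ℓ 0)⁻¹ + (ℓ 1)⁻¹)⁻¹ = ℓ 0 * ℓ 1 / (ℓ 0 + ℓ 1) := by field_simp; ring
  have hc0 : (ℓ 0)⁻¹ + (ℓ 1)⁻¹ ≠ 0 := by positivity
  rw [← hc, WMG.res_eq_of_forall_iff _ ℓ
    (fun x => if x = a ∧ a ≠ b then ((ℓ 0)⁻¹ + (ℓ 1)⁻¹)⁻¹ else 0)]
  · by_cases hab : a = b <;> simp [hab]
  intro w
  simp only [funext_iff, Fin.forall_fin_two, Pi.sub_apply, WMG.delta, twoBanana_lap_mulVec]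
  generalize (ℓ 0)⁻¹ + (ℓ 1)⁻¹ = c at hc0
  fin_cases a <;> fin_cases b <;> simp <;> grind

theorem twoBanana_genus (q : Fin 2 → ℕ) : twoBanana.genus q = 1 + q 0 + q 1 := by
  simp only [WMG.genus, Fintype.card_fin, Fin.sum_univ_two]
  ring

theorem twoBanana_Kdiv (q : Fin 2 → ℕ) (a : Fin 2) : twoBanana.Kdiv q a = 2 * q a := by
  fin_cases a <;> simp [WMG.Kdiv, WMG.valence, twoBanana_ends]

theorem twoBanana_Fres (hℓ : ∀ k, 0 < ℓ k) (k : Fin 2) :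
    twoBanana.Fres ℓ k = ℓ k / (ℓ 0 + ℓ 1) := by
  have := hℓ 0
  have := hℓ 1
  rw [WMG.Fres, twoBanana_ends, twoBanana_res ℓ hℓ, if_neg zero_ne_one]
  fin_cases k <;> simp <;> field_simp <;> ring

theorem twoBanana_rKK (hℓ : ∀ k, 0 < ℓ k) (q : Fin 2 → ℕ) :
    twoBanana.rKK q ℓ = 8 * q 0 * q 1 * (ℓ 0 * ℓ 1 / (ℓ 0 + ℓ 1)) := by
  simp only [WMG.rKK, Fin.sum_univ_two, twoBanana_Kdiv, twoBanana_res ℓ hℓ, if_true,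
    if_neg zero_ne_one, if_neg one_ne_zero]
  ring

theorem twoBanana_epsilon (hℓ : ∀ k, 0 < ℓ k) (q : Fin 2 → ℕ) :
    twoBanana.epsilon q ℓ = (4 * q 0 * q 1 * (ℓ 0 * ℓ 1 / (ℓ 0 + ℓ 1))
      + (q 0 + q 1) * (ℓ 0 + ℓ 1) / 3) / (1 + q 0 + q 1) := by
  have := hℓ 0
  have := hℓ 1
  simp only [WMG.epsilon, Fin.sum_univ_two, twoBanana_genus, twoBanana_Kdiv,
    twoBanana_Fres ℓ hℓ, twoBanana_res ℓ hℓ, twoBanana_ends, if_true, if_neg zero_ne_one,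
    if_neg one_ne_zero]
  push_cast
  field_simp
  ring

theorem twoBanana_phi (hℓ : ∀ k, 0 < ℓ k) (q : Fin 2 → ℕ) (hq : 0 < q 0 + q 1) :
    twoBanana.phi q ℓ = (q 0 + q 1) / (6 * (1 + q 0 + q 1)) * (ℓ 0 + ℓ 1)
      + 2 * q 0 * q 1 * (ℓ 0 * ℓ 1 / (ℓ 0 + ℓ 1)) / (1 + q 0 + q 1) := by
  have := hℓ 0
  have := hℓ 1
  have : (0 : ℝ) < q 0 + q 1 := by exact_mod_cast hq
  simp only [WMG.phi, twoBanana_epsilon ℓ hℓ, twoBanana_rKK ℓ hℓ, twoBanana_genus,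
    Fin.sum_univ_two]
  push_cast
  rw [show 1 + (q 0 : ℝ) + q 1 - 1 = q 0 + q 1 by ring]
  field_simp
  ring

end twoBanana

/-- Let `g ≥ 2` and let `G` be the graph with two vertices `p_1, p_2` joined by two
parallel edges of positive lengths `ℓ_1, ℓ_2`, polarized by `q(p_1) = g - 1`,
`q(p_2) = 0` (a polarized graph of genus `g`).  Then
`φ(G) = ((g-1)/(6g)) (ℓ_1 + ℓ_2)`. -/
theorem stmt_14 (g : ℕ) (hg : 2 ≤ g) (ℓ : Fin 2 → ℝ) (hℓ : ∀ k, 0 < ℓ k) :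
    twoBanana.phi (fun a => if a = 0 then g - 1 else 0) ℓ
      = ((g : ℝ) - 1) / (6 * (g : ℝ)) * (ℓ 0 + ℓ 1) := by
  rw [twoBanana_phi ℓ hℓ _ (by simp; omega)]
  simp [Nat.cast_sub (by omega : 1 ≤ g)]
end
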